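/- arXiv:1305.4315 — 8 statements merged into one kernel-verified Lean document; each statement's English description precedes it below -/
import Mathlib

section
/- Let R be a zero-dimensional commutative ring with unity, x an element of R, and a a nilpotent element of R. Then x + a is a zero-divisor of R if and only if x is a zero-divisor of R. -/
lemma aux1 {R : Type*} [CommRing R] (x a : R) :
    ∀ n : ℕ, ∀ y : R, a ^ n * y = 0 → y ≠ 0 → x * y = 0 →
      ∃ z : R, z ≠ 0 ∧ (x + a) * z = 0 := by
  intro n
  induction n with
  | zero => intro y h hy _; simp at h; exact absurd h hy
  | succ n ih =>
    intro y h hy hxy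
    by_cases hay : a * y = 0
    · exact ⟨y, hy, by rw [add_mul, hxy, hay, add_zero]⟩
    · refine ih (a * y) ?_ hay (by rw [mul_left_comm, hxy, mul_zero])
      rw [← mul_assoc, ← pow_succ]; exact h

theorem stmt1 (R : Type*) [CommRing R]
    (hdim : ∀ p : Ideal R, p.IsPrime → p.IsMaximal)
    (x a : R) (ha : IsNilpotent a) :
    (∃ y : R, y ≠ 0 ∧ (x + a) * y = 0) ↔ (∃ y : R, y ≠ 0 ∧ x * y = 0) := by
  obtain ⟨n, hn⟩ := ha
  constructor
  · rintro ⟨y, hy, hxy⟩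
    have := aux1 (x + a) (-a) n y (by rw [neg_pow, hn, mul_zero, zero_mul]) hy hxy
    simpa using this
  · rintro ⟨y, hy, hxy⟩
    exact aux1 x a n y (by rw [hn, zero_mul]) hy hxy
end

section
/- Let R be a commutative ring with unity such that the set Z(R) of zero-divisors is an ideal and 2 ∈ Z(R). Then the total graph T(Γ(R)) is a disjoint union of |R/Z(R)| complete graphs, each on a coset of Z(R); equivalently, two distinct elements x, y ∈ R satisfy x + y ∈ Z(R) if and only if x and y lie in the same coset of Z(R). -/
/-- The total graph of a commutative ring: distinct `x, y` adjacent iff `x + y` is a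
zero-divisor. -/
def totalGraph (R : Type*) [CommRing R] : SimpleGraph R :=
  SimpleGraph.fromRel (fun x y => ∃ z : R, z ≠ 0 ∧ (x + y) * z = 0)

theorem stmt4 (R : Type*) [CommRing R] (I : Ideal R)
    (hI : ∀ x : R, x ∈ I ↔ ∃ y : R, y ≠ 0 ∧ x * y = 0)
    (h2 : (2 : R) ∈ I) :
    ∀ x y : R, x ≠ y →
      ((totalGraph R).Adj x y ↔
        Ideal.Quotient.mk I x = Ideal.Quotient.mk I y) := by
  intro x y hxy
  have key : (x + y ∈ I) ↔ (x - y ∈ I) := by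
    have h2y : 2 * y ∈ I := I.mul_mem_right y h2
    constructor
    · intro h
      have := I.sub_mem h h2y
      have e : x + y - 2 * y = x - y := by ring
      rwa [e] at this
    · intro h
      have := I.add_mem h h2y
      have e : x - y + 2 * y = x + y := by ring
      rwa [e] at this
  rw [Ideal.Quotient.eq]
  constructor
  · rintro ⟨-, h | h⟩
    · exact key.mp ((hI _).mpr h)
    · rw [add_comm] at h
      exact key.mp ((hI _).mpr h)
  · intro h
    exact ⟨hxy, Or.inl ((hI _).mp (key.mpr h))⟩
end

section
/- Let R be a commutative ring with unity such that Z(R) is an ideal of R and 2 ∉ Z(R). Then for distinct x, y ∈ R, x + y ∈ Z(R) if and only if the coset of y in R/Z(R) is the negative of the coset of x; consequently T(Γ(R)) is the disjoint union of one complete graph K_{|Z(R)|} on Z(R) and (|R/Z(R)|−1)/2 complete bipartite graphs K_{|Z(R)|,|Z(R)|} on pairs of opposite nonzero cosets. -/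
theorem stmt5 (R : Type*) [CommRing R] (I : Ideal R)
    (hI : ∀ x : R, x ∈ I ↔ ∃ y : R, y ≠ 0 ∧ x * y = 0)
    (h2 : (2 : R) ∉ I) :
    ∀ x y : R, x ≠ y →
      ((totalGraph R).Adj x y ↔
        Ideal.Quotient.mk I y = - Ideal.Quotient.mk I x) := by
  intro x y hxy
  have key : (totalGraph R).Adj x y ↔ x + y ∈ I := by
    simp only [totalGraph, SimpleGraph.fromRel_adj, hI]
    constructor
    · rintro ⟨-, h | h⟩
      · exact h
      · simpa [add_comm] using h
    · exact fun h => ⟨hxy, Or.inl h⟩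
  rw [key, eq_neg_iff_add_eq_zero, ← map_add, Ideal.Quotient.eq_zero_iff_mem, add_comm]
end

section
/- If R is an infinite commutative ring with unity that is not an integral domain, then the total graph T(Γ(R)) contains an infinite clique; in fact, the induced subgraph on Z(R) contains an infinite clique. -/
theorem stmt6 (R : Type*) [CommRing R] [Infinite R]
    (h : ∃ x y : R, x ≠ 0 ∧ y ≠ 0 ∧ x * y = 0) :
    ∃ S : Set R, S.Infinite ∧ (∀ x ∈ S, ∃ y : R, y ≠ 0 ∧ x * y = 0) ∧
      S.Pairwise (totalGraph R).Adj := by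
  obtain ⟨x, y, hx, hy, hxy⟩ := h
  by_cases hA : ({a : R | a * x = 0}).Infinite
  · refine ⟨{a : R | a * x = 0}, hA, ?_, ?_⟩
    · intro a ha; exact ⟨x, hx, ha⟩
    · intro a ha b hb hab
      refine ⟨hab, Or.inl ⟨x, hx, ?_⟩⟩
      rw [add_mul, ha, hb, add_zero]
  · have hAfin : ({a : R | a * x = 0}).Finite := Set.not_infinite.mp hA
    have hrange : (Set.range (fun r : R => r * x)).Infinite := by
      by_contra hfin
      rw [Set.not_infinite] at hfin
      have huniv : (Set.univ : Set R).Finite := by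
        have he : (Set.univ : Set R) =
            ⋃ c ∈ Set.range (fun r : R => r * x), (fun r : R => r * x) ⁻¹' {c} := by
          ext r; simpa using ⟨r, rfl⟩
        rw [he]
        refine hfin.biUnion ?_
        rintro c ⟨r0, rfl⟩
        have hsub : (fun r : R => r * x) ⁻¹' {r0 * x} ⊆
            (fun a => a + r0) '' {a : R | a * x = 0} := by
          intro r hr
          simp only [Set.mem_preimage, Set.mem_singleton_iff] at hr
          refine ⟨r - r0, ?_, by ring⟩
          simp only [Set.mem_setOf_eq, sub_mul, hr, sub_self]
        exact ((hAfin.image _).subset hsub)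
      exact Set.infinite_univ huniv
    refine ⟨Set.range (fun r : R => r * x), hrange, ?_, ?_⟩
    · rintro a ⟨r, rfl⟩
      exact ⟨y, hy, by rw [mul_assoc, hxy, mul_zero]⟩
    · rintro a ⟨r, rfl⟩ b ⟨s, rfl⟩ hab
      refine ⟨hab, Or.inl ⟨y, hy, ?_⟩⟩
      rw [add_mul, mul_assoc, mul_assoc, hxy, mul_zero, mul_zero, add_zero]
end

section
/- Let F_1 and F_2 be finite fields with 3 < |F_1| ≤ |F_2|, both of odd characteristic. Then there exists a set C with |C| = |F_2| and a function L : F_1 × F_2 → C such that for all distinct pairs (x_1,y_1) ≠ (x_2,y_2) in F_1 × F_2: if x_1 + x_2 = 0 then L(x_1,y_1) ≠ L(x_2,y_2), and if y_1 + y_2 = 0 then L(x_1,y_1) ≠ L(x_2,y_2). -/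
private lemma two_ne_zero_of_odd_ringChar (F : Type*) [Field F] (h : Odd (ringChar F)) :
    (2 : F) ≠ 0 := by
  intro h20
  have hdvd : ringChar F ∣ 2 := (ringChar.spec F 2).mp (by exact_mod_cast h20)
  rcases (Nat.dvd_prime Nat.prime_two).mp hdvd with h1 | h1
  · have : ((1 : ℕ) : F) = 0 := (ringChar.spec F 1).mpr (by rw [h1])
    simp at this
  · rw [h1] at h
    exact (by decide : ¬ Odd 2) h

private lemma ne_neg_self' {F : Type*} [Field F] (h2 : (2 : F) ≠ 0) {v : F} (hv : v ≠ 0) :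
    v ≠ -v := by
  intro h
  have hvv : v + v = 0 := eq_neg_iff_add_eq_zero.mp h
  rw [← two_mul] at hvv
  rcases mul_eq_zero.mp hvv with h' | h'
  · exact h2 h'
  · exact hv h'

private lemma exists_halfset (F : Type*) [Field F] [Fintype F] (h2 : (2 : F) ≠ 0) :
    ∃ A : Finset F, (∀ v ∈ A, -v ∉ A) ∧ (∀ v : F, v ≠ 0 → v ∈ A ∨ -v ∈ A) ∧
      2 * A.card = Fintype.card F - 1 := by
  classical
  obtain ⟨e⟩ : Nonempty (F ≃ Fin (Fintype.card F)) := ⟨Fintype.equivFin F⟩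
  refine ⟨Finset.univ.filter (fun v : F => e v < e (-v)), ?_, ?_, ?_⟩
  · intro v hv hv'
    simp only [Finset.mem_filter, Finset.mem_univ, true_and, neg_neg] at hv hv'
    exact absurd hv' (lt_asymm hv)
  · intro v hv
    simp only [Finset.mem_filter, Finset.mem_univ, true_and, neg_neg]
    have hne : e v ≠ e (-v) := fun h => (ne_neg_self' h2 hv) (e.injective h)
    rcases lt_or_gt_of_ne hne with h | h
    · exact Or.inl h
    · exact Or.inr h
  · set A := Finset.univ.filter (fun v : F => e v < e (-v)) with hA
    have h1 : ∀ v ∈ A, -v ∉ A := by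
      intro v hv hv'
      simp only [hA, Finset.mem_filter, Finset.mem_univ, true_and, neg_neg] at hv hv'
      exact absurd hv' (lt_asymm hv)
    have h0 : (0 : F) ∉ A := by
      intro h
      have := h1 0 h
      rw [neg_zero] at this
      exact this h
    set B := A.image (fun v : F => -v) with hB
    have hBcard : B.card = A.card := Finset.card_image_of_injective _ neg_injective
    have hdisj : Disjoint A B := by
      rw [Finset.disjoint_left]
      intro v hv hvB
      obtain ⟨w, hw, rfl⟩ := Finset.mem_image.mp hvB
      exact h1 w hw hv
    have hunion : A ∪ B = Finset.univ.erase 0 := by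
      ext v
      simp only [Finset.mem_union, Finset.mem_erase, Finset.mem_univ, and_true, hB,
        Finset.mem_image]
      constructor
      · rintro (hv | ⟨w, hw, rfl⟩)
        · intro h; exact h0 (h ▸ hv)
        · intro h
          rw [neg_eq_zero] at h
          exact h0 (h ▸ hw)
      · intro hv0
        rcases (by
          intro v hv
          simp only [hA, Finset.mem_filter, Finset.mem_univ, true_and, neg_neg]
          have hne : e v ≠ e (-v) := fun h => (ne_neg_self' h2 hv) (e.injective h)
          rcases lt_or_gt_of_ne hne with h | h
          · exact Or.inl h
          · exact Or.inr h : ∀ v : F, v ≠ 0 → v ∈ A ∨ -v ∈ A) v hv0 with h | h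
        · exact Or.inl h
        · exact Or.inr ⟨-v, h, neg_neg v⟩
    have := Finset.card_union_of_disjoint hdisj
    rw [hunion, Finset.card_erase_of_mem (Finset.mem_univ 0), Finset.card_univ] at this
    omega

private lemma ne_neg_self'' {F : Type*} [Field F] (h2 : (2 : F) ≠ 0) {v : F} (hv : v ≠ 0) :
    v ≠ -v := by
  intro h
  have hvv : v + v = 0 := eq_neg_iff_add_eq_zero.mp h
  rw [← two_mul] at hvv
  rcases mul_eq_zero.mp hvv with h' | h'
  · exact h2 h'
  · exact hv h'

private lemma core {X Y : Type*} [Field X] [Field Y] [DecidableEq X] [DecidableEq Y]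
    (A₁ : Finset X) (A₂ : Finset Y)
    (hA₁ : ∀ v ∈ A₁, -v ∉ A₁) (ht₁ : ∀ v : X, v ≠ 0 → v ∈ A₁ ∨ -v ∈ A₁)
    (hA₂ : ∀ v ∈ A₂, -v ∉ A₂) (ht₂ : ∀ v : Y, v ≠ 0 → v ∈ A₂ ∨ -v ∈ A₂)
    [DecidablePred (· ∈ A₁)] [DecidablePred (· ∈ A₂)]
    (φ : X → Y) (hinj : Function.Injective φ) (hφ0 : φ 0 = 0)
    (u₁ u₂ : Y) (hu₁ : u₁ ∈ A₂) (hu₂ : u₂ ∈ A₂) (hne : u₁ ≠ u₂)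
    (hφ2 : ∀ x ∈ A₁, φ x ≠ u₂ ∧ φ x ≠ -u₁)
    (hφ3 : ∀ x ∈ A₁, φ (-x) ≠ u₁ ∧ φ (-x) ≠ -u₂)
    (h2x : (2 : X) ≠ 0) (h2y : (2 : Y) ≠ 0) :
    ∃ L : X × Y → Y, ∀ p q : X × Y, p ≠ q →
      (p.1 + q.1 = 0 → L p ≠ L q) ∧ (p.2 + q.2 = 0 → L p ≠ L q) := by
  set L : X × Y → Y := fun p =>
    if p.1 = 0 then p.2
    else if p.2 = 0 then φ p.1
    else if p.1 ∈ A₁ then (if p.2 ∈ A₂ then u₁ else -u₂)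
    else (if p.2 ∈ A₂ then u₂ else -u₁) with hL
  have hkeyY : ∀ a ∈ A₂, ∀ c ∈ A₂, a ≠ -c := by
    intro a ha c hc h
    exact hA₂ c hc (h ▸ ha)
  have hne0Y : ∀ a ∈ A₂, a ≠ 0 := by
    intro a ha h0
    have := hA₂ a ha
    rw [h0, neg_zero] at this
    exact this (h0 ▸ ha)
  -- value computations
  have Lx0 : ∀ y : Y, L (0, y) = y := by intro y; simp [hL]
  have Ly0 : ∀ x : X, L (x, 0) = φ x := by
    intro x
    by_cases hx : x = 0
    · simp [hL, hx, hφ0]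
    · simp [hL, hx]
  have val2 : ∀ (x : X) (y : Y), y ≠ 0 → y ∈ A₂ →
      L (x, y) = y ∨ L (x, y) = u₁ ∨ L (x, y) = u₂ := by
    intro x y hy hyA
    by_cases hx : x = 0
    · left; simp [hL, hx]
    · by_cases hxa : x ∈ A₁
      · right; left; simp [hL, hx, hy, hxa, hyA]
      · right; right; simp [hL, hx, hy, hxa, hyA]
  have val2' : ∀ (x : X) (y : Y), y ≠ 0 → y ∉ A₂ →
      L (x, y) = y ∨ L (x, y) = -u₂ ∨ L (x, y) = -u₁ := by
    intro x y hy hyA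
    by_cases hx : x = 0
    · left; simp [hL, hx]
    · by_cases hxa : x ∈ A₁
      · right; left; simp [hL, hx, hy, hxa, hyA]
      · right; right; simp [hL, hx, hy, hxa, hyA]
  have val1 : ∀ (x : X) (y : Y), x ≠ 0 → x ∈ A₁ →
      L (x, y) = φ x ∨ L (x, y) = u₁ ∨ L (x, y) = -u₂ := by
    intro x y hx hxa
    by_cases hy : y = 0
    · left; rw [hy, Ly0]
    · by_cases hyA : y ∈ A₂
      · right; left; simp [hL, hx, hy, hxa, hyA]
      · right; right; simp [hL, hx, hy, hxa, hyA]
  have val1' : ∀ (x : X) (y : Y), x ≠ 0 → x ∉ A₁ →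
      L (x, y) = φ x ∨ L (x, y) = u₂ ∨ L (x, y) = -u₁ := by
    intro x y hx hxa
    by_cases hy : y = 0
    · left; rw [hy, Ly0]
    · by_cases hyA : y ∈ A₂
      · right; left; simp [hL, hx, hy, hxa, hyA]
      · right; right; simp [hL, hx, hy, hxa, hyA]
  have key2 : ∀ (x x' : X) (y : Y), y ≠ 0 → y ∈ A₂ → L (x, y) ≠ L (x', -y) := by
    intro x x' y hy hyA
    have hy' : -y ≠ 0 := neg_ne_zero.mpr hy
    have hyA' : -y ∉ A₂ := hA₂ y hyA
    rcases val2 x y hy hyA with h1 | h1 | h1 <;>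
      rcases val2' x' (-y) hy' hyA' with h2 | h2 | h2 <;> rw [h1, h2]
    · exact hkeyY y hyA y hyA
    · exact hkeyY y hyA u₂ hu₂
    · exact hkeyY y hyA u₁ hu₁
    · exact hkeyY u₁ hu₁ y hyA
    · exact hkeyY u₁ hu₁ u₂ hu₂
    · exact hkeyY u₁ hu₁ u₁ hu₁
    · exact hkeyY u₂ hu₂ y hyA
    · exact hkeyY u₂ hu₂ u₂ hu₂
    · exact hkeyY u₂ hu₂ u₁ hu₁
  have key1 : ∀ (x : X) (y y' : Y), x ≠ 0 → x ∈ A₁ → L (x, y) ≠ L (-x, y') := by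
    intro x y y' hx hxa
    have hx' : -x ≠ 0 := neg_ne_zero.mpr hx
    have hxa' : -x ∉ A₁ := hA₁ x hxa
    rcases val1 x y hx hxa with h1 | h1 | h1 <;>
      rcases val1' (-x) y' hx' hxa' with h2 | h2 | h2 <;> rw [h1, h2]
    · exact hinj.ne (ne_neg_self'' h2x hx)
    · exact (hφ2 x hxa).1
    · exact (hφ2 x hxa).2
    · exact ((hφ3 x hxa).1).symm
    · exact hne
    · exact hkeyY u₁ hu₁ u₁ hu₁
    · exact ((hφ3 x hxa).2).symm
    · exact (hkeyY u₂ hu₂ u₂ hu₂).symm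
    · intro h
      exact hne (neg_inj.mp h).symm
  refine ⟨L, ?_⟩
  rintro ⟨x₁, y₁⟩ ⟨x₂, y₂⟩ hpq
  constructor
  · intro hx
    have hx2 : x₂ = -x₁ := (neg_eq_of_add_eq_zero_right hx).symm
    rcases eq_or_ne x₁ 0 with rfl | hx1
    · have hx2' : x₂ = 0 := by rw [hx2, neg_zero]
      subst hx2'
      have hy : y₁ ≠ y₂ := fun h => hpq (by rw [h])
      rw [Lx0, Lx0]
      exact hy
    · rcases ht₁ x₁ hx1 with h | h
      · rw [hx2]
        exact key1 x₁ y₁ y₂ hx1 h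
      · rw [hx2]
        have := key1 (-x₁) y₂ y₁ (neg_ne_zero.mpr hx1) h
        rw [neg_neg] at this
        exact this.symm
  · intro hy
    have hy2 : y₂ = -y₁ := (neg_eq_of_add_eq_zero_right hy).symm
    rcases eq_or_ne y₁ 0 with rfl | hy1
    · have hy2' : y₂ = 0 := by rw [hy2, neg_zero]
      subst hy2'
      have hxne : x₁ ≠ x₂ := fun h => hpq (by rw [h])
      rw [Ly0, Ly0]
      exact hinj.ne hxne
    · rcases ht₂ y₁ hy1 with h | h
      · rw [hy2]
        exact key2 x₁ x₂ y₁ hy1 h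
      · rw [hy2]
        have := key2 x₂ x₁ (-y₁) (neg_ne_zero.mpr hy1) h
        rw [neg_neg] at this
        exact this.symm

theorem stmt9 (F₁ F₂ : Type*) [Field F₁] [Field F₂] [Fintype F₁] [Fintype F₂]
    (h₁ : Odd (ringChar F₁)) (h₂ : Odd (ringChar F₂))
    (h3 : 3 < Fintype.card F₁) (hle : Fintype.card F₁ ≤ Fintype.card F₂) :
    ∃ L : F₁ × F₂ → Fin (Fintype.card F₂),
      ∀ p q : F₁ × F₂, p ≠ q →
        (p.1 + q.1 = 0 → L p ≠ L q) ∧ (p.2 + q.2 = 0 → L p ≠ L q) := by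
  classical
  have h2x := two_ne_zero_of_odd_ringChar F₁ h₁
  have h2y := two_ne_zero_of_odd_ringChar F₂ h₂
  obtain ⟨A₁, hA₁, ht₁, hc₁⟩ := exists_halfset F₁ h2x
  obtain ⟨A₂, hA₂, ht₂, hc₂⟩ := exists_halfset F₂ h2y
  have hcard : A₁.card ≤ A₂.card := by omega
  obtain ⟨b, hb⟩ := Finset.card_pos.mp (show 0 < A₁.card by omega)
  have hemb : Fintype.card ↥A₁ ≤ Fintype.card ↥A₂ := by
    simpa [Fintype.card_coe] using hcard
  obtain ⟨j⟩ := Function.Embedding.nonempty_of_card_le hemb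
  set J : F₁ → F₂ := fun x => if h : x ∈ A₁ then ((j ⟨x, h⟩ : ↥A₂) : F₂) else 0 with hJ
  have hJmem : ∀ x (h : x ∈ A₁), J x ∈ A₂ := by
    intro x h
    simp only [hJ, dif_pos h]
    exact (j ⟨x, h⟩).2
  have hJinj : ∀ x x', x ∈ A₁ → x' ∈ A₁ → J x = J x' → x = x' := by
    intro x x' h h' he
    simp only [hJ, dif_pos h, dif_pos h'] at he
    have := j.injective (Subtype.coe_injective he)
    exact Subtype.ext_iff.mp this
  set u₂ : F₂ := J b with hu₂def
  have hu₂A : u₂ ∈ A₂ := hJmem b hb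
  obtain ⟨u₁, hu₁e⟩ := Finset.card_pos.mp
    (show 0 < (A₂.erase u₂).card by rw [Finset.card_erase_of_mem hu₂A]; omega)
  have hu₁ne : u₁ ≠ u₂ := (Finset.mem_erase.mp hu₁e).1
  have hu₁A : u₁ ∈ A₂ := (Finset.mem_erase.mp hu₁e).2
  have h0A₁ : (0 : F₁) ∉ A₁ := by
    intro h
    have := hA₁ 0 h
    rw [neg_zero] at this
    exact this h
  have hne0Y : ∀ a ∈ A₂, a ≠ 0 := by
    intro a ha h0
    have := hA₂ a ha
    rw [h0, neg_zero] at this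
    exact this (h0 ▸ ha)
  have hkeyY : ∀ a ∈ A₂, ∀ c ∈ A₂, a ≠ -c := by
    intro a ha c hc h
    exact hA₂ c hc (h ▸ ha)
  have hnu₂ : -u₂ ∉ A₂ := hA₂ u₂ hu₂A
  set φ : F₁ → F₂ := fun x =>
    if h : x ∈ A₁ then (if x = b then -u₂ else J x)
    else (if h' : -x ∈ A₁ then (if -x = b then u₂ else -(J (-x))) else 0) with hφ
  have hval1 : ∀ x, x ∈ A₁ → φ x = if x = b then -u₂ else J x := by
    intro x h; simp only [hφ, dif_pos h]
  have hval2 : ∀ x, x ∉ A₁ → -x ∈ A₁ → φ x = if -x = b then u₂ else -(J (-x)) := by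
    intro x h h'; simp only [hφ, dif_neg h, dif_pos h']
  have hval0 : ∀ x, x ∉ A₁ → -x ∉ A₁ → φ x = 0 := by
    intro x h h'; simp only [hφ, dif_neg h, dif_neg h']
  have hφ0 : φ 0 = 0 := by
    apply hval0 0 h0A₁
    rw [neg_zero]; exact h0A₁
  -- injectivity
  have hinj : Function.Injective φ := by
    intro x x' he
    by_cases h : x ∈ A₁
    · rw [hval1 x h] at he
      by_cases h' : x' ∈ A₁
      · rw [hval1 x' h'] at he
        by_cases hxb : x = b
        · by_cases hx'b : x' = b
          · rw [hxb, hx'b]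
          · rw [if_pos hxb, if_neg hx'b] at he
            exact absurd (by rw [he]; exact hJmem x' h') hnu₂
        · by_cases hx'b : x' = b
          · rw [if_neg hxb, if_pos hx'b] at he
            exact absurd (by rw [← he]; exact hJmem x h) hnu₂
          · rw [if_neg hxb, if_neg hx'b] at he
            exact hJinj x x' h h' he
      · by_cases h'' : -x' ∈ A₁
        · rw [hval2 x' h' h''] at he
          by_cases hxb : x = b
          · by_cases hx'b : -x' = b
            · rw [if_pos hxb, if_pos hx'b] at he
              exact absurd he.symm (hkeyY u₂ hu₂A u₂ hu₂A)
            · rw [if_pos hxb, if_neg hx'b] at he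
              have h5 : J b = J (-x') := by
                rw [← hu₂def]
                exact neg_inj.mp he
              exact absurd (hJinj b (-x') hb h'' h5).symm hx'b
          · by_cases hx'b : -x' = b
            · rw [if_neg hxb, if_pos hx'b] at he
              exact absurd (hJinj x b h hb he) hxb
            · rw [if_neg hxb, if_neg hx'b] at he
              exact absurd he (hkeyY (J x) (hJmem x h) (J (-x')) (hJmem (-x') h''))
        · rw [hval0 x' h' h''] at he
          by_cases hxb : x = b
          · rw [if_pos hxb] at he
            rw [neg_eq_zero] at he
            exact absurd he (hne0Y u₂ hu₂A)
          · rw [if_neg hxb] at he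
            exact absurd he (hne0Y (J x) (hJmem x h))
    · by_cases h'' : -x ∈ A₁
      · rw [hval2 x h h''] at he
        by_cases h' : x' ∈ A₁
        · rw [hval1 x' h'] at he
          by_cases hxb : -x = b
          · by_cases hx'b : x' = b
            · rw [if_pos hxb, if_pos hx'b] at he
              exact absurd he (hkeyY u₂ hu₂A u₂ hu₂A)
            · rw [if_pos hxb, if_neg hx'b] at he
              rw [hu₂def] at he
              exact absurd (hJinj b x' hb h' he).symm hx'b
          · by_cases hx'b : x' = b
            · rw [if_neg hxb, if_pos hx'b] at he
              have h5 : J (-x) = J b := by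
                rw [← hu₂def]
                exact neg_inj.mp he
              exact absurd (hJinj (-x) b h'' hb h5) hxb
            · rw [if_neg hxb, if_neg hx'b] at he
              exact absurd he.symm (hkeyY (J x') (hJmem x' h') (J (-x)) (hJmem (-x) h''))
        · by_cases h''' : -x' ∈ A₁
          · rw [hval2 x' h' h'''] at he
            by_cases hxb : -x = b
            · by_cases hx'b : -x' = b
              · have : -x = -x' := by rw [hxb, hx'b]
                exact neg_inj.mp this
              · rw [if_pos hxb, if_neg hx'b] at he
                exact absurd he (hkeyY u₂ hu₂A (J (-x')) (hJmem (-x') h'''))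
            · by_cases hx'b : -x' = b
              · rw [if_neg hxb, if_pos hx'b] at he
                exact absurd he.symm (hkeyY u₂ hu₂A (J (-x)) (hJmem (-x) h''))
              · rw [if_neg hxb, if_neg hx'b] at he
                have := hJinj (-x) (-x') h'' h''' (neg_inj.mp he)
                exact neg_inj.mp this
          · rw [hval0 x' h' h'''] at he
            by_cases hxb : -x = b
            · rw [if_pos hxb] at he
              exact absurd he (hne0Y u₂ hu₂A)
            · rw [if_neg hxb] at he
              rw [neg_eq_zero] at he
              exact absurd he (hne0Y (J (-x)) (hJmem (-x) h''))
      · have hx0 : x = 0 := by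
          by_contra hx0
          rcases ht₁ x hx0 with hh | hh
          · exact h hh
          · exact h'' hh
        rw [hval0 x h h''] at he
        by_cases h' : x' ∈ A₁
        · rw [hval1 x' h'] at he
          by_cases hx'b : x' = b
          · rw [if_pos hx'b] at he
            have := congrArg Neg.neg he
            rw [neg_zero, neg_neg] at this
            exact absurd this.symm (hne0Y u₂ hu₂A)
          · rw [if_neg hx'b] at he
            exact absurd he.symm (hne0Y (J x') (hJmem x' h'))
        · by_cases h''' : -x' ∈ A₁
          · rw [hval2 x' h' h'''] at he
            by_cases hx'b : -x' = b
            · rw [if_pos hx'b] at he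
              exact absurd he.symm (hne0Y u₂ hu₂A)
            · rw [if_neg hx'b] at he
              have := congrArg Neg.neg he
              rw [neg_zero, neg_neg] at this
              exact absurd this.symm (hne0Y (J (-x')) (hJmem (-x') h'''))
          · have hx'0 : x' = 0 := by
              by_contra hx'0
              rcases ht₁ x' hx'0 with hh | hh
              · exact h' hh
              · exact h''' hh
            rw [hx0, hx'0]
  -- the two avoidance properties
  have hφ2 : ∀ x ∈ A₁, φ x ≠ u₂ ∧ φ x ≠ -u₁ := by
    intro x h
    rw [hval1 x h]
    by_cases hxb : x = b
    · rw [if_pos hxb]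
      constructor
      · exact (hkeyY u₂ hu₂A u₂ hu₂A).symm
      · intro hh
        exact hu₁ne (neg_inj.mp hh).symm
    · rw [if_neg hxb]
      constructor
      · intro hh
        exact hxb (hJinj x b h hb hh)
      · exact hkeyY (J x) (hJmem x h) u₁ hu₁A
  have hφ3 : ∀ x ∈ A₁, φ (-x) ≠ u₁ ∧ φ (-x) ≠ -u₂ := by
    intro x h
    have hnx : -x ∉ A₁ := hA₁ x h
    have hnnx : -(-x) ∈ A₁ := by rw [neg_neg]; exact h
    rw [hval2 (-x) hnx hnnx]
    rw [neg_neg]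
    by_cases hxb : x = b
    · rw [if_pos hxb]
      exact ⟨fun hh => hu₁ne hh.symm, hkeyY u₂ hu₂A u₂ hu₂A⟩
    · rw [if_neg hxb]
      constructor
      · exact (hkeyY u₁ hu₁A (J x) (hJmem x h)).symm
      · intro hh
        exact hxb (hJinj x b h hb (neg_inj.mp hh))
  obtain ⟨L, hL⟩ := core A₁ A₂ hA₁ ht₁ hA₂ ht₂ φ hinj hφ0 u₁ u₂ hu₁A hu₂A hu₁ne hφ2 hφ3 h2x h2y
  obtain ⟨e⟩ : Nonempty (F₂ ≃ Fin (Fintype.card F₂)) := ⟨Fintype.equivFin F₂⟩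
  refine ⟨fun p => e (L p), ?_⟩
  intro p q hpq
  obtain ⟨c1, c2⟩ := hL p q hpq
  exact ⟨fun h hh => c1 h (e.injective hh), fun h hh => c2 h (e.injective hh)⟩
end

section
/- Let n ≥ 2 and F_1,…,F_n be finite fields with |F_1| ≤ ⋯ ≤ |F_n|. Then the clique number of the total graph T(Γ(F_1 × ⋯ × F_n)) is at least |F_2|⋯|F_n|. -/
theorem stmt11 (n : ℕ) (hn : 2 ≤ n) (F : Fin n → Type*)
    [∀ i, Field (F i)] [∀ i, Fintype (F i)]
    (hmono : ∀ i j : Fin n, i ≤ j → Fintype.card (F i) ≤ Fintype.card (F j)) :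
    (∏ i ∈ Finset.univ.erase (⟨0, by omega⟩ : Fin n), Fintype.card (F i)) ≤
      (totalGraph (∀ i, F i)).cliqueNum := by
  classical
  set i0 : Fin n := ⟨0, by omega⟩ with hi0
  set s : Finset (∀ i, F i) := Finset.univ.filter (fun f => f i0 = 0) with hs
  have hclique : (totalGraph (∀ i, F i)).IsClique s := by
    intro x hx y hy hxy
    simp only [hs, Finset.mem_coe, Finset.mem_filter] at hx hy
    refine ⟨hxy, Or.inl ⟨Pi.single i0 1, ?_, ?_⟩⟩
    · intro h
      have := congrFun h i0
      simp at this
    · funext i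
      by_cases h : i = i0
      · subst h
        simp [hx.2, hy.2]
      · simp [Pi.single_eq_of_ne h]
  have hcard : s.card = ∏ i ∈ Finset.univ.erase i0, Fintype.card (F i) := by
    have e : {f : ∀ i, F i // f i0 = 0} ≃ ∀ i : {i : Fin n // i ≠ i0}, F i :=
      { toFun := fun f i => f.1 i.1
        invFun := fun g => ⟨fun i => if h : i = i0 then 0 else g ⟨i, h⟩, by simp⟩
        left_inv := by
          rintro ⟨f, hf⟩
          ext i
          by_cases h : i = i0
          · subst h; simp [hf]
          · simp [h]
        right_inv := by
          intro g
          funext i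
          simp [i.2] }
    have h1 : s.card = Fintype.card {f : ∀ i, F i // f i0 = 0} := by
      rw [Fintype.card_subtype]
    rw [h1, Fintype.card_congr e, Fintype.card_pi]
    rw [← Finset.prod_subtype (Finset.univ.erase i0)
      (fun i => by simp [Finset.mem_erase]) (fun i => Fintype.card (F i))]
  calc (∏ i ∈ Finset.univ.erase i0, Fintype.card (F i)) = s.card := hcard.symm
    _ ≤ _ := hclique.card_le_cliqueNum
end

section
/- Let R be a finite commutative ring with unity such that 2 is not a zero-divisor; equivalently R/J(R) is a product of fields of odd characteristic. Then χ(Reg(Γ(R))) = χ(Reg(Γ(R/J(R)))). -/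
/-- The induced subgraph of the total graph on the regular elements (non-zero-divisors):
distinct regular `x, y` adjacent iff `x + y` is a zero-divisor. -/
def regGraph (R : Type*) [CommRing R] :
    SimpleGraph {x : R // ¬∃ y : R, y ≠ 0 ∧ x * y = 0} :=
  SimpleGraph.fromRel (fun x y => ∃ z : R, z ≠ 0 ∧ ((x : R) + y) * z = 0)

private lemma chrom_le_of_hom {V W : Type*} {G : SimpleGraph V} {H : SimpleGraph W}
    (f : G →g H) : G.chromaticNumber ≤ H.chromaticNumber := by
  apply SimpleGraph.chromaticNumber_le_of_forall_imp
  rintro n ⟨C⟩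
  exact ⟨C.comp f⟩

private lemma reg_iff_unit {R : Type*} [CommRing R] [Finite R] (x : R) :
    (¬∃ y : R, y ≠ 0 ∧ x * y = 0) ↔ IsUnit x := by
  rw [isUnit_iff_mem_nonZeroDivisors_of_finite, mem_nonZeroDivisors_iff_right]
  constructor
  · intro h y hy
    by_contra hy0
    exact h ⟨y, hy0, by rwa [mul_comm]⟩
  · rintro h ⟨y, hy0, hxy⟩
    exact hy0 (h y (by rwa [mul_comm]))

private lemma unit_of_unit_mk {R : Type*} [CommRing R] {x : R}
    (h : IsUnit (Ideal.Quotient.mk (Ideal.jacobson (⊥ : Ideal R)) x)) : IsUnit x := by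
  obtain ⟨u, hu⟩ := h
  obtain ⟨z, hz⟩ := Ideal.Quotient.mk_surjective (↑u⁻¹ : R ⧸ Ideal.jacobson (⊥ : Ideal R))
  have h1 : Ideal.Quotient.mk (Ideal.jacobson (⊥ : Ideal R)) x *
      Ideal.Quotient.mk (Ideal.jacobson (⊥ : Ideal R)) z = 1 := by
    rw [hz, ← hu, ← Units.val_mul, mul_inv_cancel, Units.val_one]
  have hxz : x * z - 1 ∈ Ideal.jacobson (⊥ : Ideal R) := by
    rw [← Ideal.Quotient.eq_zero_iff_mem, map_sub, map_mul, h1, map_one, sub_self]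
  exact isUnit_of_mul_isUnit_left (Ideal.isUnit_of_sub_one_mem_jacobson_bot (x * z) hxz)

theorem stmt15 (R : Type*) [CommRing R] [Finite R]
    (h2 : ¬∃ y : R, y ≠ 0 ∧ (2 : R) * y = 0) :
    (regGraph R).chromaticNumber =
      (regGraph (R ⧸ Ideal.jacobson (⊥ : Ideal R))).chromaticNumber := by
  set J := Ideal.jacobson (⊥ : Ideal R) with hJ
  let π : R →+* R ⧸ J := Ideal.Quotient.mk J
  have hu2 : IsUnit (2 : R) := (reg_iff_unit 2).mp h2
  haveI : Finite (R ⧸ J) := Finite.of_surjective _ Ideal.Quotient.mk_surjective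
  -- adjacency characterization
  have adj_iff : ∀ (S : Type _) [CommRing S] [Finite S]
      (x y : {x : S // ¬∃ y : S, y ≠ 0 ∧ x * y = 0}),
      (regGraph S).Adj x y ↔ x ≠ y ∧ ¬IsUnit ((x : S) + y) := by
    intro S _ _ x y
    simp only [regGraph, SimpleGraph.fromRel_adj]
    constructor
    · rintro ⟨hne, h | h⟩
      · refine ⟨hne, fun hu => ?_⟩
        obtain ⟨z, hz0, hz⟩ := h
        exact hz0 (by
          have := congrArg (fun t => (↑hu.unit⁻¹ : S) * t) hz
          simpa [← mul_assoc, IsUnit.val_inv_mul] using this)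
      · refine ⟨hne, fun hu => ?_⟩
        obtain ⟨z, hz0, hz⟩ := h
        rw [add_comm] at hu
        exact hz0 (by
          have := congrArg (fun t => (↑hu.unit⁻¹ : S) * t) hz
          simpa [← mul_assoc, IsUnit.val_inv_mul] using this)
    · rintro ⟨hne, hnu⟩
      refine ⟨hne, Or.inl ?_⟩
      rw [← reg_iff_unit, not_not] at hnu
      exact hnu
  -- forward hom
  have mkP : ∀ x : {x : R // ¬∃ y : R, y ≠ 0 ∧ x * y = 0},
      ¬∃ y : R ⧸ J, y ≠ 0 ∧ (π x) * y = 0 := by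
    intro x
    rw [reg_iff_unit]
    exact ((reg_iff_unit (x : R)).mp x.2).map π
  let f : {x : R // ¬∃ y : R, y ≠ 0 ∧ x * y = 0} →
      {x : R ⧸ J // ¬∃ y : R ⧸ J, y ≠ 0 ∧ x * y = 0} := fun x => ⟨π x, mkP x⟩
  have fhom : (regGraph R) →g (regGraph (R ⧸ J)) := by
    refine ⟨f, ?_⟩
    intro x y hxy
    rw [adj_iff] at hxy ⊢
    obtain ⟨hne, hnu⟩ := hxy
    constructor
    · intro hfe
      have hpi : π x = π y := congrArg Subtype.val hfe
      apply hnu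
      apply unit_of_unit_mk
      have : π ((x : R) + y) = 2 * π x := by
        rw [map_add, hpi]; ring
      rw [map_add, ← map_add]
      rw [this]
      exact ((hu2.map π).mul (((reg_iff_unit (x : R)).mp x.2).map π))
    · intro hu
      exact hnu (unit_of_unit_mk (by rw [map_add]; exact hu))
  -- backward hom via a section
  have sect : ∀ a : {x : R ⧸ J // ¬∃ y : R ⧸ J, y ≠ 0 ∧ x * y = 0},
      ∃ x : R, (¬∃ y : R, y ≠ 0 ∧ x * y = 0) ∧ π x = a := by
    intro a
    obtain ⟨x, hx⟩ := Ideal.Quotient.mk_surjective (a : R ⧸ J)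
    refine ⟨x, ?_, hx⟩
    rw [reg_iff_unit]
    apply unit_of_unit_mk
    rw [show Ideal.Quotient.mk (Ideal.jacobson (⊥ : Ideal R)) x = π x from rfl, hx,
      ← reg_iff_unit]
    exact a.2
  choose g hg1 hg2 using sect
  have ghom : (regGraph (R ⧸ J)) →g (regGraph R) := by
    refine ⟨fun a => ⟨g a, hg1 a⟩, ?_⟩
    intro a b hab
    rw [adj_iff] at hab ⊢
    obtain ⟨hne, hnu⟩ := hab
    constructor
    · intro he
      apply hne
      have : g a = g b := congrArg Subtype.val he
      apply Subtype.ext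
      rw [← hg2 a, ← hg2 b, this]
    · intro hu
      apply hnu
      have : π (g a + g b) = (a : R ⧸ J) + b := by rw [map_add, hg2, hg2]
      rw [← this]
      exact hu.map π
  exact le_antisymm (chrom_le_of_hom fhom) (chrom_le_of_hom ghom)
end

section
/- Let R be a finite commutative local ring with maximal ideal m such that R/m has characteristic 2. Then Reg(Γ(R)) is a disjoint union of complete graphs each on |m| vertices; in particular χ(Reg(Γ(R))) = ω(Reg(Γ(R))) = |m| = |Reg(R)|/(|R/m| − 1). -/
section Aux

variable {R : Type*} [CommRing R] [Fintype R] [IsLocalRing R]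

lemma reg_iff_isUnit (x : R) : (¬∃ y : R, y ≠ 0 ∧ x * y = 0) ↔ IsUnit x := by
  constructor
  · intro h
    have hinj : Function.Injective (fun y : R => x * y) := by
      intro a b hab
      by_contra hne
      exact h ⟨a - b, sub_ne_zero.mpr hne, by
        simp only [mul_sub]
        simpa [sub_eq_zero] using hab⟩
    obtain ⟨y, hy⟩ := Finite.surjective_of_injective hinj 1
    exact IsUnit.of_mul_eq_one y hy
  · rintro hx ⟨y, hy0, hxy⟩
    exact hy0 ((IsUnit.mul_right_eq_zero hx).mp hxy)

lemma zd_iff_mem (w : R) :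
    (∃ z : R, z ≠ 0 ∧ w * z = 0) ↔ w ∈ IsLocalRing.maximalIdeal R := by
  rw [IsLocalRing.mem_maximalIdeal, mem_nonunits_iff, ← reg_iff_isUnit, not_not]

lemma two_mem (hchar : ringChar (R ⧸ IsLocalRing.maximalIdeal R) = 2) :
    (2 : R) ∈ IsLocalRing.maximalIdeal R := by
  have hcp : CharP (R ⧸ IsLocalRing.maximalIdeal R) 2 := hchar ▸ ringChar.charP _
  have h2 : ((2 : ℕ) : R ⧸ IsLocalRing.maximalIdeal R) = 0 := CharP.cast_eq_zero _ 2
  have : (Ideal.Quotient.mk (IsLocalRing.maximalIdeal R)) (2 : R) = 0 := by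
    rw [map_ofNat]; exact_mod_cast h2
  exact (Ideal.Quotient.eq_zero_iff_mem).mp this

lemma adj_iff (hchar : ringChar (R ⧸ IsLocalRing.maximalIdeal R) = 2)
    (x y : {x : R // ¬∃ y : R, y ≠ 0 ∧ x * y = 0}) :
    (regGraph R).Adj x y ↔ x ≠ y ∧ (x : R) - y ∈ IsLocalRing.maximalIdeal R := by
  rw [regGraph, SimpleGraph.fromRel_adj]
  have hcomm : ((y : R) + x) = ((x : R) + y) := add_comm _ _
  rw [hcomm, or_self, zd_iff_mem]
  constructor
  · rintro ⟨hne, hsum⟩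
    refine ⟨hne, ?_⟩
    have h2y : (2 : R) * y ∈ IsLocalRing.maximalIdeal R :=
      Ideal.mul_mem_right _ _ (two_mem hchar)
    have : (x : R) - y = ((x : R) + y) - 2 * y := by ring
    rw [this]
    exact Ideal.sub_mem _ hsum h2y
  · rintro ⟨hne, hsub⟩
    refine ⟨hne, ?_⟩
    have h2y : (2 : R) * y ∈ IsLocalRing.maximalIdeal R :=
      Ideal.mul_mem_right _ _ (two_mem hchar)
    have : (x : R) + y = ((x : R) - y) + 2 * y := by ring
    rw [this]
    exact Ideal.add_mem _ hsub h2y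

end Aux

theorem stmt19 (R : Type*) [CommRing R] [Fintype R] [IsLocalRing R]
    (hchar : ringChar (R ⧸ IsLocalRing.maximalIdeal R) = 2) :
    (∀ x y : {x : R // ¬∃ y : R, y ≠ 0 ∧ x * y = 0}, x ≠ y →
      ((regGraph R).Adj x y ↔ (x : R) - y ∈ IsLocalRing.maximalIdeal R)) ∧
    (regGraph R).chromaticNumber = ((Nat.card (IsLocalRing.maximalIdeal R) : ℕ) : ℕ∞) ∧
    (regGraph R).cliqueNum = Nat.card (IsLocalRing.maximalIdeal R) ∧
    Nat.card (IsLocalRing.maximalIdeal R) =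
      Nat.card {x : R // ¬∃ y : R, y ≠ 0 ∧ x * y = 0} /
        (Nat.card (R ⧸ IsLocalRing.maximalIdeal R) - 1) := by
  classical
  set m := IsLocalRing.maximalIdeal R with hm
  set V := {x : R // ¬∃ y : R, y ≠ 0 ∧ x * y = 0} with hV
  -- the coloring
  let q : R →+* R ⧸ m := Ideal.Quotient.mk m
  let s : R ⧸ m → R := Function.surjInv Ideal.Quotient.mk_surjective
  have hs : ∀ a : R ⧸ m, q (s a) = a := fun a =>
    Function.surjInv_eq Ideal.Quotient.mk_surjective a
  let c : V → m := fun v => ⟨(v : R) - s (q v), by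
    rw [← Ideal.Quotient.eq_zero_iff_mem]
    show q ((v : R) - s (q v)) = 0
    rw [map_sub, hs, sub_self]⟩
  have hcol : ∀ u v : V, (regGraph R).Adj u v → c u ≠ c v := by
    intro u v huv hcc
    rw [adj_iff hchar] at huv
    obtain ⟨hne, hmem⟩ := huv
    have hquv : q u = q v := Ideal.Quotient.eq.mpr hmem
    have : (u : R) - s (q u) = (v : R) - s (q v) := congrArg Subtype.val hcc
    rw [hquv] at this
    exact hne (Subtype.ext (by linear_combination this))
  let Col : (regGraph R).Coloring m := SimpleGraph.Coloring.mk c (fun {u v} h => hcol u v h)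
  -- the big clique
  have hone : ∀ t : R, t ∈ m → IsUnit (1 + t) := by
    intro t ht
    by_contra hu
    have : (1 : R) + t ∈ m := (IsLocalRing.mem_maximalIdeal _).mpr hu
    have h1 : (1 : R) ∈ m := by simpa using Ideal.sub_mem _ this ht
    exact (m.ne_top_iff_one.mp (Ideal.IsMaximal.ne_top inferInstance)) h1
  let f : m → V := fun t => ⟨1 + (t : R), (reg_iff_isUnit _).mpr (hone t t.2)⟩
  have hfinj : Function.Injective f := by
    intro a b hab
    have : (1 : R) + a = 1 + b := congrArg Subtype.val hab
    exact Subtype.ext (add_left_cancel this)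
  have hK : ∀ a b : m, a ≠ b → (regGraph R).Adj (f a) (f b) := by
    intro a b hab
    rw [adj_iff hchar]
    refine ⟨fun h => hab (hfinj h), ?_⟩
    have : ((f a : R)) - (f b : R) = (a : R) - b := by simp [f]
    rw [this]
    exact Ideal.sub_mem _ a.2 b.2
  let K : Finset V := Finset.univ.image f
  have hKclique : (regGraph R).IsClique (K : Set V) := by
    intro u hu v hv huv
    simp only [K, Finset.coe_image, Set.mem_image, Finset.mem_coe] at hu hv
    obtain ⟨a, -, rfl⟩ := hu
    obtain ⟨b, -, rfl⟩ := hv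
    exact hK a b (fun h => huv (congrArg f h))
  have hKcard : K.card = Fintype.card m := by
    rw [Finset.card_image_of_injective _ hfinj, Finset.card_univ]
  -- every clique has card at most |m|
  have hclique_le : ∀ (t : Finset V), (regGraph R).IsClique (t : Set V) →
      t.card ≤ Fintype.card m := by
    intro t ht
    rcases t.eq_empty_or_nonempty with rfl | ⟨x₀, hx₀⟩
    · simp
    · have hmem : ∀ y ∈ t, ((y : R) - (x₀ : R)) ∈ m := by
        intro y hy
        by_cases hxy : y = x₀
        · subst hxy; simpa using m.zero_mem
        · have := ht (Finset.mem_coe.mpr hy) (Finset.mem_coe.mpr hx₀) hxy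
          rw [adj_iff hchar] at this
          exact this.2
      have hcard := Finset.card_le_card_of_injOn
        (f := fun y : V => (y : R) - (x₀ : R))
        (s := t) (t := (m : Set R).toFinset) ?_ ?_
      · calc t.card ≤ (m : Set R).toFinset.card := hcard
          _ = Fintype.card (m : Set R) := Set.toFinset_card _
          _ = Fintype.card m := rfl
      · intro y hy
        rw [Finset.mem_coe, Set.mem_toFinset]
        exact hmem y hy
      · intro a _ b _ hab
        have : (a : R) = b := by
          have := sub_left_injective (G := R) hab
          exact this
        exact Subtype.ext this
  have hnc : Nat.card m = Fintype.card m := Nat.card_eq_fintype_card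
  refine ⟨?_, ?_, ?_, ?_⟩
  · intro x y hxy
    rw [adj_iff hchar]
    exact and_iff_right hxy
  · apply le_antisymm
    · rw [hnc]
      exact Col.colorable.chromaticNumber_le
    · have := hKclique.card_le_chromaticNumber
      rw [hKcard] at this
      rw [hnc]
      exact this
  · apply le_antisymm
    · obtain ⟨sc, hsc⟩ := (regGraph R).exists_isNClique_cliqueNum
      rw [hnc, ← hsc.card_eq]
      exact hclique_le sc hsc.isClique
    · rw [hnc, ← hKcard]
      exact SimpleGraph.IsClique.card_le_cliqueNum (tc := hKclique)
  · -- counting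
    have hq := Submodule.card_eq_card_quotient_mul_card m
    have hVcard : Nat.card V = Nat.card R - Nat.card m := by
      rw [Nat.card_eq_fintype_card, Nat.card_eq_fintype_card, hnc]
      have h1 : Fintype.card V = Fintype.card R -
          Fintype.card {x : R // ∃ y : R, y ≠ 0 ∧ x * y = 0} :=
        Fintype.card_subtype_compl _
      have h2 : Fintype.card {x : R // ∃ y : R, y ≠ 0 ∧ x * y = 0} = Fintype.card m :=
        Fintype.card_congr (Equiv.subtypeEquivRight fun x => zd_iff_mem x)
      rw [h1, h2]
    have hq2 : 2 ≤ Nat.card (R ⧸ m) := by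
      have : Nontrivial (R ⧸ m) := Ideal.Quotient.nontrivial_iff.mpr
        (Ideal.IsMaximal.ne_top inferInstance)
      rw [Nat.card_eq_fintype_card]
      exact Fintype.one_lt_card_iff_nontrivial.mpr this
    set k := Nat.card m
    set qq := Nat.card (R ⧸ m)
    have hVk : Nat.card V = k * (qq - 1) := by
      rw [hVcard, hq, Nat.mul_sub_one, mul_comm]
    rw [hVk, Nat.mul_div_cancel _ (by omega : 0 < qq - 1)]
end
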